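/- arXiv:1409.4113 — 7 statements merged into one kernel-verified Lean document; each statement's English description precedes it below -/
import Mathlib

section
/- If {s_k} and {t_k} are sequences of least nonnegative residues mod m such that the series ∑ m^k s_k and ∑ m^k t_k both converge in D_m to the same limit, then s_k = t_k for every k. -/
/-!
A partial sum of `n` digits is a natural number below `m ^ n`, so it suffices that the `n`-th
partial sums of the two series agree modulo `m ^ n`. Both are congruent to `L` modulo `m ^ n` in
`D_m`: some later partial sum is `m`-adically within `m ^ (-n)` of `L`, hence differs from `L`
by `m ^ n` times an element of `D_m` (this is where `L ∈ D_m` enters), and it differs from the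
`n`-th partial sum by an integer multiple of `m ^ n`. Finally, an integer divisible by `m ^ n`
in `D_m` is divisible by `m ^ n` in `ℤ`, since an element of `D_m` whose denominator divides
`m ^ n` is an integer.
-/

def Dm (m : ℕ) : Set ℚ := {q : ℚ | Nat.Coprime q.den m}

/-- The `m`-adic norm: `|a/b|_m = m^{-k}` where `m^k` is the largest power of `m`
dividing the numerator `a` (in lowest terms), and `|0|_m = 0`. -/
noncomputable def mnorm (m : ℕ) (q : ℚ) : ℝ :=
  if q = 0 then 0 else (m : ℝ) ^ (-(m.maxPowDiv q.num.natAbs : ℤ))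

noncomputable def mdist (m : ℕ) (x y : ℚ) : ℝ := mnorm m (x - y)

open Finset Filter Topology

theorem add_mem_Dm {m : ℕ} {x y : ℚ} (hx : x ∈ Dm m) (hy : y ∈ Dm m) : x + y ∈ Dm m :=
  Nat.Coprime.coprime_dvd_left (Rat.add_den_dvd x y) (Nat.Coprime.mul_left hx hy)

theorem neg_mem_Dm {m : ℕ} {x : ℚ} (hx : x ∈ Dm m) : -x ∈ Dm m := by
  simpa [Dm] using hx

theorem intCast_mem_Dm (m : ℕ) (a : ℤ) : (a : ℚ) ∈ Dm m := by
  simp [Dm]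

theorem intCast_div_mem_Dm {m b : ℕ} (a : ℤ) (hb : b.Coprime m) : (a / b : ℚ) ∈ Dm m := by
  have hden : (a / b : ℚ).den ∣ b := by
    have := Rat.den_dvd a b
    rw [Rat.divInt_eq_div] at this
    exact_mod_cast this
  exact Nat.Coprime.coprime_dvd_left hden hb

def PowDvdInDm (m n : ℕ) (q : ℚ) : Prop := ∃ r ∈ Dm m, q = (m : ℚ) ^ n * r

namespace PowDvdInDm

variable {m n : ℕ} {x y : ℚ}

theorem add (hx : PowDvdInDm m n x) (hy : PowDvdInDm m n y) : PowDvdInDm m n (x + y) := by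
  obtain ⟨r, hr, rfl⟩ := hx
  obtain ⟨r', hr', rfl⟩ := hy
  exact ⟨r + r', add_mem_Dm hr hr', by ring⟩

theorem neg (hx : PowDvdInDm m n x) : PowDvdInDm m n (-x) := by
  obtain ⟨r, hr, rfl⟩ := hx
  exact ⟨-r, neg_mem_Dm hr, by ring⟩

theorem sub (hx : PowDvdInDm m n x) (hy : PowDvdInDm m n y) : PowDvdInDm m n (x - y) := by
  simpa only [sub_eq_add_neg] using hx.add hy.neg

theorem intCast_iff (hm : 0 < m) {a : ℤ} : PowDvdInDm m n a ↔ (m : ℤ) ^ n ∣ a := by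
  constructor
  · rintro ⟨r, hr, ha⟩
    have hmn : ((m : ℤ) ^ n : ℚ) ≠ 0 := by positivity
    have hr_eq : r = (a / ((m : ℤ) ^ n : ℤ) : ℚ) := by
      rw [ha]; push_cast; field_simp
    have hden : r.den = 1 := by
      refine (Nat.Coprime.pow_right n hr).eq_one_of_dvd ?_
      have := Rat.den_dvd a ((m : ℤ) ^ n)
      rw [Rat.divInt_eq_div, ← hr_eq] at this
      exact_mod_cast this
    rw [← (Rat.den_eq_one_iff r).mp hden] at ha
    exact ⟨r.num, by exact_mod_cast ha⟩
  · rintro ⟨c, rfl⟩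
    exact ⟨c, intCast_mem_Dm m c, by push_cast; ring⟩

end PowDvdInDm

theorem pow_dvd_num_of_mnorm_lt {m n : ℕ} (hm : 1 < m) {q : ℚ}
    (h : mnorm m q < (m : ℝ) ^ (-(n : ℤ))) : (m : ℤ) ^ n ∣ q.num := by
  rcases eq_or_ne q 0 with rfl | hq
  · simp
  rw [mnorm, if_neg hq] at h
  have hle : n ≤ padicValNat m q.num.natAbs := by
    have := (zpow_lt_zpow_iff_right₀ (by exact_mod_cast hm : (1 : ℝ) < m)).mp h
    exact_mod_cast (neg_lt_neg_iff.mp this).le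
  rw [← Int.dvd_natAbs]
  exact_mod_cast (pow_dvd_pow m hle).trans pow_padicValNat_dvd

theorem powDvdInDm_of_mnorm_lt {m n : ℕ} (hm : 1 < m) {q : ℚ} (hq : q ∈ Dm m)
    (h : mnorm m q < (m : ℝ) ^ (-(n : ℤ))) : PowDvdInDm m n q := by
  obtain ⟨a, ha⟩ := pow_dvd_num_of_mnorm_lt hm h
  refine ⟨a / q.den, intCast_div_mem_Dm a hq, ?_⟩
  nth_rw 1 [← Rat.num_div_den q, ha]
  push_cast
  ring

def ofDigitsFn (m : ℕ) (f : ℕ → ℕ) (n : ℕ) : ℕ := ∑ k ∈ range n, m ^ k * f k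

section ofDigitsFn

variable {m : ℕ} {f g : ℕ → ℕ}

theorem cast_ofDigitsFn {R : Type*} [CommSemiring R] (n : ℕ) :
    (ofDigitsFn m f n : R) = ∑ k ∈ range n, (m : R) ^ k * (f k : R) := by
  simp [ofDigitsFn]

theorem ofDigitsFn_succ (n : ℕ) : ofDigitsFn m f (n + 1) = ofDigitsFn m f n + m ^ n * f n :=
  sum_range_succ _ n

theorem ofDigitsFn_lt (hm : 0 < m) (hf : ∀ k, f k ≤ m - 1) (n : ℕ) : ofDigitsFn m f n < m ^ n := by
  induction n with
  | zero => simp [ofDigitsFn]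
  | succ n ih =>
    have hdigit : m ^ n * f n ≤ m ^ n * (m - 1) := Nat.mul_le_mul_left _ (hf n)
    have hsplit : m ^ n * (m - 1) + m ^ n = m ^ (n + 1) := by
      rw [← mul_add_one, Nat.sub_one_add_one hm.ne', pow_succ]
    rw [ofDigitsFn_succ]
    omega

theorem ofDigitsFn_modEq {n j : ℕ} (hnj : n ≤ j) :
    ofDigitsFn m f j ≡ ofDigitsFn m f n [MOD m ^ n] := by
  obtain ⟨d, rfl⟩ := Nat.exists_eq_add_of_le hnj
  have htail : ofDigitsFn m f (n + d) =
      ofDigitsFn m f n + m ^ n * ∑ k ∈ range d, m ^ k * f (n + k) := by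
    simp only [ofDigitsFn, sum_range_add, mul_sum, pow_add, mul_assoc]
  rw [htail]
  exact Nat.add_mul_mod_self_left _ _ _

theorem eq_of_ofDigitsFn_eq (hm : 0 < m)
    (h : ∀ n, ofDigitsFn m f n = ofDigitsFn m g n) : f = g := by
  funext k
  have hk := h (k + 1)
  rw [ofDigitsFn_succ, ofDigitsFn_succ, h k, Nat.add_left_cancel_iff] at hk
  exact Nat.eq_of_mul_eq_mul_left (by positivity) hk

end ofDigitsFn

theorem powDvdInDm_sub_ofDigitsFn {m : ℕ} (hm : 1 < m) {L : ℚ} (hL : L ∈ Dm m) {f : ℕ → ℕ}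
    (hconv : Tendsto (fun n => mdist m (ofDigitsFn m f n) L) atTop (𝓝 0)) (n : ℕ) :
    PowDvdInDm m n (L - ofDigitsFn m f n) := by
  have hε : (0 : ℝ) < (m : ℝ) ^ (-(n : ℤ)) := by positivity
  obtain ⟨j, hj, hnj⟩ := ((hconv.eventually_lt_const hε).and (eventually_ge_atTop n)).exists
  have hmem : (ofDigitsFn m f j : ℚ) - L ∈ Dm m := by
    rw [sub_eq_add_neg]
    exact add_mem_Dm (by exact_mod_cast intCast_mem_Dm m (ofDigitsFn m f j)) (neg_mem_Dm hL)
  have hclose : PowDvdInDm m n (ofDigitsFn m f j - L) := powDvdInDm_of_mnorm_lt hm hmem hj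
  have htail : PowDvdInDm m n ((ofDigitsFn m f j - ofDigitsFn m f n : ℤ) : ℚ) := by
    rw [PowDvdInDm.intCast_iff (by omega)]
    exact_mod_cast Nat.modEq_iff_dvd.mp (ofDigitsFn_modEq (f := f) hnj).symm
  convert htail.sub hclose using 1
  push_cast
  ring

theorem series_unique (m : ℕ) (hm : 2 ≤ m) (s t : ℕ → ℕ)
    (hs : ∀ k, s k ≤ m - 1) (ht : ∀ k, t k ≤ m - 1) (L : ℚ) (hL : L ∈ Dm m)
    (hconvs : Filter.Tendsto
      (fun n => mdist m (∑ k ∈ Finset.range n, (m : ℚ) ^ k * (s k : ℚ)) L)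
      Filter.atTop (nhds 0))
    (hconvt : Filter.Tendsto
      (fun n => mdist m (∑ k ∈ Finset.range n, (m : ℚ) ^ k * (t k : ℚ)) L)
      Filter.atTop (nhds 0)) :
    ∀ k, s k = t k := by
  have hL_sub (f : ℕ → ℕ)
      (hconv : Tendsto (fun n => mdist m (∑ k ∈ range n, (m : ℚ) ^ k * (f k : ℚ)) L) atTop (𝓝 0))
      (n : ℕ) : PowDvdInDm m n (L - ofDigitsFn m f n) :=
    powDvdInDm_sub_ofDigitsFn hm hL (by simpa only [cast_ofDigitsFn] using hconv) n
  refine congrFun (eq_of_ofDigitsFn_eq (m := m) (by omega) fun n => ?_)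
  have hdvd_sub : (m : ℤ) ^ n ∣ (ofDigitsFn m t n : ℤ) - ofDigitsFn m s n := by
    rw [← PowDvdInDm.intCast_iff (by omega)]
    convert (hL_sub s hconvs n).sub (hL_sub t hconvt n) using 1
    push_cast
    ring
  exact Nat.ModEq.eq_of_lt_of_lt (Nat.modEq_iff_dvd.mpr (by exact_mod_cast hdvd_sub))
    (ofDigitsFn_lt (by omega) hs n) (ofDigitsFn_lt (by omega) ht n)
end

section
/- With σ_n defined by the Newton-type recursion σ_{n+1} = (c − σ_n²)(2σ_1)^{−1} + σ_n, the sequence {σ_n} satisfies: for all n ≥ k, m^k divides σ_n − σ_k; hence {σ_n} is a Cauchy sequence in the m-adic metric. -/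
section Newton

variable {R : Type*} [CommRing R]

theorem newton_step_residual (c s t : R) :
    c - ((c - s ^ 2) * t + s) ^ 2 = (c - s ^ 2) * (1 - 2 * s * t) - (c - s ^ 2) ^ 2 * t ^ 2 := by
  ring

theorem newton_residual_dvd {a c t : R} {σ : ℕ → R} (h1 : a ∣ c - σ 1 ^ 2)
    (ht : a ∣ 1 - 2 * σ 1 * t) (hrec : ∀ n, 1 ≤ n → σ (n + 1) = (c - σ n ^ 2) * t + σ n)
    {n : ℕ} (hn : 1 ≤ n) : a ^ n ∣ c - σ n ^ 2 ∧ a ∣ σ n - σ 1 := by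
  induction n, hn using Nat.le_induction with
  | base => simpa using h1
  | succ n hn ih =>
    obtain ⟨hres, hnear⟩ := ih
    have hderiv : a ∣ 1 - 2 * σ n * t := by
      rw [show 1 - 2 * σ n * t = (1 - 2 * σ 1 * t) - 2 * t * (σ n - σ 1) by ring]
      exact dvd_sub ht (dvd_mul_of_dvd_right hnear _)
    have hres_sq : a ^ (n + 1) ∣ (c - σ n ^ 2) ^ 2 :=
      (pow_dvd_pow a (by omega : n + 1 ≤ n * 2)).trans
        (pow_mul a n 2 ▸ pow_dvd_pow_of_dvd hres 2)
    rw [hrec n hn, newton_step_residual]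
    refine ⟨dvd_sub (pow_succ a n ▸ mul_dvd_mul hres hderiv) (hres_sq.mul_right _), ?_⟩
    rw [show (c - σ n ^ 2) * t + σ n - σ 1 = (c - σ n ^ 2) * t + (σ n - σ 1) by ring]
    exact dvd_add (((dvd_pow_self a (by omega)).trans hres).mul_right t) hnear

theorem pow_dvd_sub_of_pow_dvd_succ_sub {a : R} {u : ℕ → R} {k : ℕ}
    (h : ∀ n, k ≤ n → a ^ n ∣ u (n + 1) - u n) {n : ℕ} (hkn : k ≤ n) :
    a ^ k ∣ u n - u k := by
  induction n, hkn using Nat.le_induction with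
  | base => simp
  | succ n hkn ih =>
    rw [← sub_add_sub_cancel]
    exact dvd_add ((pow_dvd_pow a hkn).trans (h n hkn)) ih

theorem newton_pow_dvd_sub {a c t : R} {σ : ℕ → R} (h1 : a ∣ c - σ 1 ^ 2)
    (ht : a ∣ 1 - 2 * σ 1 * t) (hrec : ∀ n, 1 ≤ n → σ (n + 1) = (c - σ n ^ 2) * t + σ n)
    {k n : ℕ} (hk : 1 ≤ k) (hkn : k ≤ n) : a ^ k ∣ σ n - σ k := by
  refine pow_dvd_sub_of_pow_dvd_succ_sub (fun j hkj => ?_) hkn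
  rw [hrec j (hk.trans hkj), add_sub_cancel_right]
  exact (newton_residual_dvd h1 ht hrec (hk.trans hkj)).1.mul_right t

end Newton

theorem mnorm_intCast_le_of_pow_dvd {m N : ℕ} (hm : 1 < m) {z : ℤ} (h : (m : ℤ) ^ N ∣ z) :
    mnorm m z ≤ (m : ℝ)⁻¹ ^ N := by
  unfold mnorm
  split_ifs with hz
  · positivity
  · have hz' : z.natAbs ≠ 0 := by simpa using hz
    have hval : N ≤ m.maxPowDiv z.natAbs :=
      (Nat.pow_dvd_iff_le_padicValNat hm.ne' hz').mp (by simpa using Int.natAbs_dvd_natAbs.mpr h)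
    rw [Rat.num_intCast, inv_pow, ← zpow_natCast, ← zpow_neg]
    exact zpow_le_zpow_right₀ (by exact_mod_cast hm.le) (by omega)

theorem mdist_cauchy_of_pow_dvd_sub {m : ℕ} (hm : 1 < m) {u : ℕ → ℤ}
    (h : ∀ k n, 1 ≤ k → k ≤ n → (m : ℤ) ^ k ∣ u n - u k) :
    ∀ ε : ℝ, 0 < ε → ∃ N, ∀ p q, N ≤ p → N ≤ q → mdist m (u p) (u q) < ε := by
  intro ε hε
  have hm' : (1 : ℝ) < m := by exact_mod_cast hm
  obtain ⟨N, hN⟩ := exists_pow_lt_of_lt_one hε (inv_lt_one_of_one_lt₀ hm')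
  refine ⟨max N 1, fun p q hp hq => ?_⟩
  have hdvd : (m : ℤ) ^ max N 1 ∣ u p - u q := by
    rw [← sub_sub_sub_cancel_right (u p) (u q) (u (max N 1))]
    exact dvd_sub (h _ _ (le_max_right _ _) hp) (h _ _ (le_max_right _ _) hq)
  calc mdist m (u p) (u q) = mnorm m ((u p - u q : ℤ) : ℚ) := by simp [mdist]
    _ ≤ (m : ℝ)⁻¹ ^ max N 1 := mnorm_intCast_le_of_pow_dvd hm hdvd
    _ ≤ (m : ℝ)⁻¹ ^ N :=
        pow_le_pow_of_le_one (by positivity) (inv_le_one_of_one_le₀ hm'.le) (le_max_left _ _)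
    _ < ε := hN

theorem newton_seq_cauchy_general (m : ℕ) (hm : 3 ≤ m) (c t : ℤ)
    (σ : ℕ → ℤ)
    (h1 : σ 1 ^ 2 ≡ c [ZMOD (m : ℤ)])
    (ht : 2 * σ 1 * t ≡ 1 [ZMOD (m : ℤ)])
    (hrec : ∀ n, 1 ≤ n → σ (n + 1) = (c - σ n ^ 2) * t + σ n) :
    (∀ k n, 1 ≤ k → k ≤ n → (m : ℤ) ^ k ∣ σ n - σ k) ∧
    (∀ ε : ℝ, 0 < ε → ∃ N, ∀ p q, N ≤ p → N ≤ q →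
      mdist m ((σ p : ℚ)) ((σ q : ℚ)) < ε) := by
  have hdvd : ∀ k n, 1 ≤ k → k ≤ n → (m : ℤ) ^ k ∣ σ n - σ k :=
    fun _ _ hk hkn => newton_pow_dvd_sub h1.dvd ht.dvd hrec hk hkn
  exact ⟨hdvd, mdist_cauchy_of_pow_dvd_sub (by omega) hdvd⟩

theorem newton_seq_cauchy (m : ℕ) (hm : 3 ≤ m) (hodd : Odd m) (c t : ℤ)
    (hc : IsCoprime c (m : ℤ)) (σ : ℕ → ℤ)
    (h1 : σ 1 ^ 2 ≡ c [ZMOD (m : ℤ)])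
    (ht : 2 * σ 1 * t ≡ 1 [ZMOD (m : ℤ)])
    (hrec : ∀ n, 1 ≤ n → σ (n + 1) = (c - σ n ^ 2) * t + σ n) :
    (∀ k n, 1 ≤ k → k ≤ n → (m : ℤ) ^ k ∣ σ n - σ k) ∧
    (∀ ε : ℝ, 0 < ε → ∃ N, ∀ p q, N ≤ p → N ≤ q →
      mdist m ((σ p : ℚ)) ((σ q : ℚ)) < ε) :=
  newton_seq_cauchy_general m hm c t σ h1 ht hrec
end

section
/- Let a₀ = a be an integer and b coprime to m. Suppose integers {a_n} and residues {s_n} (0 ≤ s_n < m) satisfy s_n·b ≡ a_n (mod m) and a_n = (m+1)·(a_{n−1} − s_{n−1}b)/m for n ≥ 1. Then (m+1)^n · a ≡ ∑_{k=0}^n m^k (m+1)^{n−k} s_k b (mod m^{n+1}) for every n ≥ 1. -/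
/-!
Unrolling the recursion gives the exact identity
`m ^ n * a n = (m + 1) ^ n * a 0 - ∑ k < n, m ^ k * (m + 1) ^ (n - k) * s k * b`,
and the remaining term `m ^ n * a n` agrees with `m ^ n * s n * b` modulo `m ^ (n + 1)`
because `a n ≡ s n * b [ZMOD m]`.
-/

section DigitRecursion

variable {R : Type*} [CommRing R] (m c : R) (a d : ℕ → R)

theorem pow_mul_eq_sub_sum_of_step (hstep : ∀ n, m * a (n + 1) = c * (a n - d n)) (n : ℕ) :
    m ^ n * a n = c ^ n * a 0 - ∑ k ∈ Finset.range n, m ^ k * c ^ (n - k) * d k := by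
  induction n with
  | zero => simp
  | succ n ih =>
    have hsum : ∑ k ∈ Finset.range n, m ^ k * c ^ (n + 1 - k) * d k
        = c * ∑ k ∈ Finset.range n, m ^ k * c ^ (n - k) * d k := by
      rw [Finset.mul_sum]
      refine Finset.sum_congr rfl fun k hk => ?_
      rw [Nat.sub_add_comm (Finset.mem_range.mp hk).le, pow_succ]
      ring
    calc m ^ (n + 1) * a (n + 1) = m ^ n * (m * a (n + 1)) := by ring
      _ = c * (m ^ n * a n) - m ^ n * c * d n := by rw [hstep]; ring
      _ = _ := by rw [ih, Finset.sum_range_succ, hsum, Nat.add_sub_cancel_left, pow_one]; ring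

theorem pow_succ_dvd_sub_sum_of_step (hstep : ∀ n, m * a (n + 1) = c * (a n - d n))
    (hdvd : ∀ n, m ∣ a n - d n) (n : ℕ) :
    m ^ (n + 1) ∣ c ^ n * a 0 - ∑ k ∈ Finset.range (n + 1), m ^ k * c ^ (n - k) * d k := by
  obtain ⟨q, hq⟩ := hdvd n
  refine ⟨q, ?_⟩
  have hunrolled := pow_mul_eq_sub_sum_of_step m c a d hstep n
  rw [Finset.sum_range_succ, Nat.sub_self, pow_zero]
  linear_combination -hunrolled + m ^ n * hq

end DigitRecursion

theorem rotation_digit_sum_general (m : ℕ) (b : ℤ)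
    (a : ℕ → ℤ) (s : ℕ → ℕ)
    (hmod : ∀ n, (s n : ℤ) * b ≡ a n [ZMOD (m : ℤ)])
    (hrec : ∀ n, 1 ≤ n → (m : ℤ) * a n = ((m : ℤ) + 1) * (a (n - 1) - (s (n - 1) : ℤ) * b)) :
    ∀ n : ℕ, 1 ≤ n →
      ((m : ℤ) + 1) ^ n * a 0 ≡
        ∑ k ∈ Finset.range (n + 1), (m : ℤ) ^ k * ((m : ℤ) + 1) ^ (n - k) * (s k : ℤ) * b
      [ZMOD (m : ℤ) ^ (n + 1)] := by
  intro n _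
  have hstep (n : ℕ) : (m : ℤ) * a (n + 1) = ((m : ℤ) + 1) * (a n - s n * b) :=
    hrec (n + 1) (Nat.le_add_left 1 n)
  have hdvd := pow_succ_dvd_sub_sum_of_step (m : ℤ) (m + 1) a (fun k => s k * b) hstep
    (fun k => (hmod k).dvd) n
  simp only [← mul_assoc] at hdvd
  exact (Int.modEq_iff_dvd.mpr hdvd).symm

theorem rotation_digit_sum (m : ℕ) (hm : 2 ≤ m) (b : ℤ) (hb : IsCoprime b (m : ℤ))
    (a : ℕ → ℤ) (s : ℕ → ℕ) (hs : ∀ n, s n < m)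
    (hmod : ∀ n, (s n : ℤ) * b ≡ a n [ZMOD (m : ℤ)])
    (hrec : ∀ n, 1 ≤ n → (m : ℤ) * a n = ((m : ℤ) + 1) * (a (n - 1) - (s (n - 1) : ℤ) * b)) :
    ∀ n : ℕ, 1 ≤ n →
      ((m : ℤ) + 1) ^ n * a 0 ≡
        ∑ k ∈ Finset.range (n + 1), (m : ℤ) ^ k * ((m : ℤ) + 1) ^ (n - k) * (s k : ℤ) * b
      [ZMOD (m : ℤ) ^ (n + 1)] :=
  rotation_digit_sum_general m b a s hmod hrec
end

section
/- With x_n, r_n as above, for every n ≥ 1: (m+1)^n · ((m+1)x + r) ≡ ∑_{k=1}^n (m+1)^{n−k} m^{k−1} r_k (mod m^n). -/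
/-!
Put `S k = (m+1) x_k + r_k`. The recurrence says `S k = m x_{k+1} + r_{k+1}`, and since
`(m+1) - m = 1` this gives `(m+1) S k = m S (k+1) + r_{k+1}`. Unrolling `n` times,
`(m+1)^n S 0 = ∑_{k=1}^n (m+1)^(n-k) m^(k-1) r_k + m^n S n`, and the last term vanishes mod `m^n`.
-/

open Finset

theorem pow_mul_eq_sum_add_pow_mul_of_mul_eq_mul_add {R : Type*} [CommRing R] (a b : R)
    (S r : ℕ → R) (hstep : ∀ k, a * S k = b * S (k + 1) + r (k + 1)) (n : ℕ) :
    a ^ n * S 0 = ∑ k ∈ Icc 1 n, a ^ (n - k) * b ^ (k - 1) * r k + b ^ n * S n := by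
  induction n with
  | zero => simp
  | succ n ih =>
    have hshift : ∑ k ∈ Icc 1 n, a ^ (n + 1 - k) * b ^ (k - 1) * r k
        = a * ∑ k ∈ Icc 1 n, a ^ (n - k) * b ^ (k - 1) * r k := by
      rw [mul_sum]
      refine sum_congr rfl fun k hk => ?_
      rw [Nat.sub_add_comm (mem_Icc.mp hk).2, pow_succ]
      ring
    rw [sum_Icc_succ_top (Nat.le_add_left 1 n), hshift, Nat.sub_self, Nat.add_sub_cancel,
      pow_succ', mul_assoc, ih, mul_add, mul_left_comm a (b ^ n), hstep n]
    ring

theorem succ_mul_add_eq_mul_add_div_add_mod (m x r : ℕ) :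
    (m + 1) * x + r = m * (x + (x + r) / m) + (x + r) % m := by
  have := Nat.div_add_mod (x + r) m
  linarith

theorem rotation_congruence_general (m : ℕ) (x r : ℕ → ℕ)
    (hxrec : ∀ n, x (n + 1) = x n + (x n + r n) / m)
    (hrrec : ∀ n, r (n + 1) = x n + r n - m * ((x n + r n) / m)) :
    ∀ n : ℕ, 1 ≤ n →
      ((m : ℤ) + 1) ^ n * (((m : ℤ) + 1) * (x 0 : ℤ) + (r 0 : ℤ)) ≡
        ∑ k ∈ Finset.Icc 1 n, ((m : ℤ) + 1) ^ (n - k) * (m : ℤ) ^ (k - 1) * (r k : ℤ)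
      [ZMOD (m : ℤ) ^ n] := by
  intro n _
  set S : ℕ → ℤ := fun k => ((m : ℤ) + 1) * (x k : ℤ) + (r k : ℤ)
  have hS : ∀ k, S k = m * x (k + 1) + r (k + 1) := fun k => by
    simp only [S]
    rw [hxrec, hrrec, ← Nat.mod_eq_sub_mul_div]
    exact_mod_cast succ_mul_add_eq_mul_add_div_add_mod m (x k) (r k)
  have hstep : ∀ k, ((m : ℤ) + 1) * S k = m * S (k + 1) + r (k + 1) := fun k => by
    rw [hS k]
    ring
  rw [pow_mul_eq_sum_add_pow_mul_of_mul_eq_mul_add _ _ S (fun k => (r k : ℤ)) hstep n]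
  exact Int.add_modEq_left_iff.mpr (dvd_mul_right _ _)

theorem rotation_congruence (m : ℕ) (hm : 1 ≤ m) (x r : ℕ → ℕ)
    (hx0 : 1 ≤ x 0) (hr0 : r 0 < m)
    (hxrec : ∀ n, x (n + 1) = x n + (x n + r n) / m)
    (hrrec : ∀ n, r (n + 1) = x n + r n - m * ((x n + r n) / m)) :
    ∀ n : ℕ, 1 ≤ n →
      ((m : ℤ) + 1) ^ n * (((m : ℤ) + 1) * (x 0 : ℤ) + (r 0 : ℤ)) ≡
        ∑ k ∈ Finset.Icc 1 n, ((m : ℤ) + 1) ^ (n - k) * (m : ℤ) ^ (k - 1) * (r k : ℤ)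
      [ZMOD (m : ℤ) ^ n] :=
  rotation_congruence_general m x r hxrec hrrec
end

section
/- Define y_0 = (m+1)x + r and y_{n+1} = ⌊(m+1)y_n/m⌋. Then for every n ≥ 0, ⌊y_n/(m+1)⌋ = x_n and y_n ≡ r_n (mod m+1); equivalently y_n = (m+1)x_n + r_n. -/
theorem y_encodes_xn_rn (m : ℕ) (hm : 1 ≤ m) (x r y : ℕ → ℕ)
    (hx0 : 1 ≤ x 0) (hr0 : r 0 < m)
    (hxrec : ∀ n, x (n + 1) = x n + (x n + r n) / m)
    (hrrec : ∀ n, r (n + 1) = x n + r n - m * ((x n + r n) / m))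
    (hy0 : y 0 = (m + 1) * x 0 + r 0)
    (hyrec : ∀ n, y (n + 1) = (m + 1) * y n / m) :
    ∀ n, y n / (m + 1) = x n ∧ y n % (m + 1) = r n ∧ y n = (m + 1) * x n + r n := by
  have hm0 : 0 < m := hm
  have key : ∀ n, r n < m ∧ y n = (m + 1) * x n + r n := by
    intro n
    induction n with
    | zero => exact ⟨hr0, hy0⟩
    | succ n ih =>
      obtain ⟨hr, hy⟩ := ih
      have h1 := Nat.mod_add_div (x n + r n) m
      have h2 : (x n + r n) % m < m := Nat.mod_lt _ hm0
      have h4 : x n + r n - m * ((x n + r n) / m) = (x n + r n) % m :=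
        (Nat.mod_def _ _).symm
      set q := (x n + r n) / m with hq
      have h3 : (m + 1) * ((m + 1) * x n + r n)
          = m * ((m + 1) * x n + (x n + r n) + q) + (x n + r n) % m := by
        have e : m * ((m + 1) * x n + (x n + r n) + q) + (x n + r n) % m
            = m * ((m + 1) * x n + (x n + r n)) + ((x n + r n) % m + m * q) := by ring
        rw [e, h1]; ring
      constructor
      · rw [hrrec n, h4]; exact h2
      · rw [hyrec n, hy, hxrec n, hrrec n, h3, Nat.mul_add_div hm0,
          Nat.div_eq_of_lt h2, h4]
        have h5 : (m + 1) * (x n + q) + (x n + r n) % m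
            = (m + 1) * x n + (x n + r n) + q := by
          have e : (m + 1) * (x n + q) + (x n + r n) % m
              = (m + 1) * x n + q + ((x n + r n) % m + m * q) := by ring
          rw [e, h1]; ring
        rw [← hq]
        omega
  intro n
  obtain ⟨hr, hy⟩ := key n
  have hrm1 : r n < m + 1 := by omega
  refine ⟨?_, ?_, hy⟩
  · rw [hy, Nat.mul_add_div (by omega), Nat.div_eq_of_lt hrm1]; omega
  · rw [hy, Nat.mul_add_mod, Nat.mod_eq_of_lt hrm1]
end

section
/- For the triangle with rotation number 1, the head of row x equals the number of 1's in the binary representation of x: T_1(x, 0) = (number of binary digits of x equal to 1), for all x ≥ 1. -/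
/-- The triangle `T_1`: row `x` has entries in columns `0, …, x-1`; each row is
formed by rotating the previous row left by one, then appending `1 + ` its head. -/
def T1 : ℕ → ℕ → ℕ
  | 0, _ => 0
  | 1, _ => 1
  | (x + 2), r => if r ≤ x then T1 (x + 1) ((r + 1) % (x + 1)) else 1 + T1 (x + 1) 0

lemma pc_two_mul (n : ℕ) (h : 0 < n) :
    (Nat.digits 2 (2 * n)).count 1 = (Nat.digits 2 n).count 1 := by
  rw [Nat.digits_def' (by norm_num : 1 < 2) (by omega)]
  rw [Nat.mul_mod_right, Nat.mul_div_cancel_left _ (by norm_num : 0 < 2)]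
  simp

lemma pc_two_mul_add_one (n : ℕ) :
    (Nat.digits 2 (2 * n + 1)).count 1 = (Nat.digits 2 n).count 1 + 1 := by
  rw [Nat.digits_def' (by norm_num : 1 < 2) (by omega)]
  have h1 : (2 * n + 1) % 2 = 1 := by omega
  have h2 : (2 * n + 1) / 2 = n := by omega
  rw [h1, h2]
  simp

lemma T1_key : ∀ x r, r < x → T1 x r = (Nat.digits 2 (x + r)).count 1 := by
  intro x
  induction x using Nat.strong_induction_on with
  | _ x ih =>
    match x with
    | 0 => intro r h; omega
    | 1 =>
      intro r h
      interval_cases r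
      simp [T1]
    | x + 2 =>
      intro r h
      by_cases hr : r ≤ x
      · rw [show T1 (x + 2) r = T1 (x + 1) ((r + 1) % (x + 1)) by
          simp [T1, hr]]
        by_cases h2 : r < x
        · rw [Nat.mod_eq_of_lt (by omega)]
          rw [ih (x + 1) (by omega) (r + 1) (by omega)]
          ring_nf
        · have hx : r = x := by omega
          rw [hx, Nat.mod_self]
          rw [ih (x + 1) (by omega) 0 (by omega)]
          rw [show x + 2 + x = 2 * (x + 1) by ring]
          rw [pc_two_mul _ (by omega)]
      · have hx : r = x + 1 := by omega
        rw [hx]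
        rw [show T1 (x + 2) (x + 1) = 1 + T1 (x + 1) 0 by simp [T1]]
        rw [ih (x + 1) (by omega) 0 (by omega)]
        rw [show x + 2 + (x + 1) = 2 * (x + 1) + 1 by ring]
        rw [pc_two_mul_add_one]
        simp [Nat.add_comm]

theorem head_eq_binary_digit_count :
    ∀ x : ℕ, 1 ≤ x → T1 x 0 = (Nat.digits 2 x).count 1 := by
  intro x hx
  have := T1_key x 0 (by omega)
  simpa using this
end

section
/- If j = 2^{k+1}s + (1 − (−2)^k)/3 > 0 for some integer s and nonnegative integer k, then k ≤ ⌈log₂ j⌉ + 1, with equality if and only if s = 0. -/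
/-!
Since `|(-2)^k| = 2^k`, the offset `t = (1 - (-2)^k)/3` lies between `(1 - 2^k)/3` and
`(2^k + 1)/3`.
If `s ≠ 0`, positivity of `j` forces `s ≥ 1`, whence `j > 2^k` and `⌈log₂ j⌉ ≥ k + 1`.
If `s = 0`, then `j = t > 0` forces `k` odd, so `3j = 2^k + 1` and `2^(k-2) < j ≤ 2^(k-1)`,
i.e. `⌈log₂ j⌉ = k - 1`.
-/

namespace Real

theorem intCast_lt_ceil_logb_iff {b x : ℝ} (hb : 1 < b) (hx : 0 < x) (m : ℤ) :
    m < ⌈logb b x⌉ ↔ b ^ m < x := by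
  rw [Int.lt_ceil, lt_logb_iff_rpow_lt hb hx, rpow_intCast]

theorem ceil_logb_le_iff {b x : ℝ} (hb : 1 < b) (hx : 0 < x) (m : ℤ) :
    ⌈logb b x⌉ ≤ m ↔ x ≤ b ^ m := by
  rw [Int.ceil_le, logb_le_iff_le_rpow hb hx, rpow_intCast]

theorem ceil_logb_eq_iff {b x : ℝ} (hb : 1 < b) (hx : 0 < x) (m : ℤ) :
    ⌈logb b x⌉ = m ↔ b ^ (m - 1) < x ∧ x ≤ b ^ m := by
  rw [← intCast_lt_ceil_logb_iff hb hx, ← ceil_logb_le_iff hb hx]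
  omega

theorem ceil_logb_two_eq_of_three_mul_eq {x : ℝ} (m : ℕ) (hx : 3 * x = 2 ^ (m + 1) + 1) :
    ⌈logb 2 x⌉ = m := by
  have hm : (1 : ℝ) ≤ 2 ^ m := one_le_pow₀ one_le_two
  rw [pow_succ] at hx
  rw [ceil_logb_eq_iff one_lt_two (by linarith) m, zpow_sub_one₀ two_ne_zero, zpow_natCast]
  constructor <;> linarith

end Real

section NegTwoPow

variable {t : ℤ} {k : ℕ}

theorem three_mul_bounds_of_eq_one_sub_neg_two_pow (ht : 3 * t = 1 - (-2) ^ k) :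
    1 - 2 ^ k ≤ 3 * t ∧ 3 * t ≤ 2 ^ k + 1 := by
  have h := abs_le.mp (le_of_eq (show |(-2 : ℤ) ^ k| = 2 ^ k by simp [abs_pow]))
  constructor <;> linarith [h.1, h.2]

theorem three_mul_eq_two_pow_add_one_of_pos (ht : 3 * t = 1 - (-2) ^ k) (hpos : 0 < t) :
    3 * t = 2 ^ k + 1 := by
  rcases Nat.even_or_odd k with he | ho
  · have : (1 : ℤ) ≤ 2 ^ k := one_le_pow₀ one_le_two
    rw [he.neg_pow] at ht
    omega
  · rw [ht, ho.neg_pow]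
    ring

theorem two_pow_lt_of_ne_zero {s : ℤ} (ht : 3 * t = 1 - (-2) ^ k)
    (hpos : 0 < 2 ^ (k + 1) * s + t) (hs : s ≠ 0) : 2 ^ k < 2 ^ (k + 1) * s + t := by
  obtain ⟨hlo, hhi⟩ := three_mul_bounds_of_eq_one_sub_neg_two_pow ht
  have hk : (0 : ℤ) < 2 ^ k := by positivity
  rw [pow_succ] at hpos ⊢
  rcases lt_or_gt_of_ne hs with hs | hs <;> nlinarith

end NegTwoPow

theorem k_le_ceil_log (j s t : ℤ) (k : ℕ) (hj : 0 < j)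
    (ht : 3 * t = 1 - (-2 : ℤ) ^ k) (hjform : j = 2 ^ (k + 1) * s + t) :
    (k : ℤ) ≤ ⌈Real.logb 2 (j : ℝ)⌉ + 1 ∧
    ((k : ℤ) = ⌈Real.logb 2 (j : ℝ)⌉ + 1 ↔ s = 0) := by
  subst hjform
  by_cases hs : s = 0
  · subst hs
    simp only [mul_zero, zero_add] at hj ⊢
    have h3t := three_mul_eq_two_pow_add_one_of_pos ht hj
    obtain ⟨m, rfl⟩ : ∃ m, k = m + 1 :=
      Nat.exists_eq_add_one.mpr (Nat.pos_of_ne_zero (by rintro rfl; omega))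
    rw [Real.ceil_logb_two_eq_of_three_mul_eq m (by exact_mod_cast h3t)]
    simp
  · have hj_gt := two_pow_lt_of_ne_zero ht hj hs
    have hk_lt : (k : ℤ) < ⌈Real.logb 2 ((2 ^ (k + 1) * s + t : ℤ) : ℝ)⌉ :=
      (Real.intCast_lt_ceil_logb_iff one_lt_two (by exact_mod_cast hj) k).mpr
        (by exact_mod_cast hj_gt)
    omega
end
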